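/- arXiv:0806.4510 — 7 statements merged into one kernel-verified Lean document; each statement's English description precedes it below -/
import Mathlib

section
/- Let F be a finite field with q elements and let R be a polynomial in F[X_1, …, X_n]. If R is nonzero and the degree of R in each variable X_i is at most q−1, then there exists a point (x_1, …, x_n) in F^n such that R(x_1, …, x_n) ≠ 0. -/
/-- If `R` is a nonzero polynomial over a finite field `F` with `q` elements whose degree in
each variable is at most `q - 1`, then `R` has a nonzero value at some point of `F^n`. -/
theorem nonzero_eval_of_degreeOf_le {F : Type*} [Field F] [Fintype F] (q n : ℕ)
    (hq : Fintype.card F = q) (R : MvPolynomial (Fin n) F) (hR : R ≠ 0)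
    (hdeg : ∀ i : Fin n, R.degreeOf i ≤ q - 1) :
    ∃ x : Fin n → F, MvPolynomial.eval x R ≠ 0 := by
  by_contra! hzero
  have hdeg_lt : ∀ i, R.degreeOf i < (Finset.univ : Finset F).card := by
    have hq_pos : 0 < q := hq ▸ Fintype.card_pos
    intro i
    rw [Finset.card_univ, hq]
    exact lt_of_le_of_lt (hdeg i) (Nat.sub_lt hq_pos one_pos)
  exact hR (MvPolynomial.eq_zero_of_eval_zero_at_prod_finset R (fun _ ↦ Finset.univ) hdeg_lt
    fun x _ ↦ hzero x)
end

section
/- Let F be a finite field with q elements and let P be a polynomial in F[X_1, …, X_n]. Let R be a reduced representative of P, i.e., the degree of R in each variable X_i is at most q−1 and P−R lies in the ideal generated by X_1^q−X_1, …, X_n^q−X_n. Then there exists a point (x_1, …, x_n) in F^n with P(x_1, …, x_n) ≠ 0 if and only if R is not the zero polynomial. -/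
/-!
Every `X_i ^ q - X_i` vanishes on `F^n` since `a ^ q = a` in `F`, so `P` and `R` define the same
function on `F^n`. Reduced polynomials and functions `F^n → F` both form spaces of dimension `q ^ n`,
and evaluation maps the former onto the latter (indicator polynomials), so a reduced polynomial that
vanishes everywhere is zero.
-/

namespace MvPolynomial

variable {σ K : Type*} [Field K] [Fintype K]

theorem mem_restrictDegree_iff_degreeOf_le {R : Type*} [CommSemiring R] {p : MvPolynomial σ R}
    {n : ℕ} : p ∈ restrictDegree σ R n ↔ ∀ i, p.degreeOf i ≤ n := by
  simp only [mem_restrictDegree, degreeOf_le_iff]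
  exact ⟨fun h i s hs => h s hs i, fun h s hs i => h i s hs⟩

theorem eq_zero_of_eval_eq_zero_of_degreeOf_le [Finite σ] {p : MvPolynomial σ K}
    (h : ∀ v : σ → K, eval v p = 0) (hp : ∀ i, p.degreeOf i ≤ Fintype.card K - 1) : p = 0 := by
  -- `eq_zero_of_eval_eq_zero` wants the variables in the universe of `K`: transport `p` there.
  let e : σ ≃ ULift (Fin (Nat.card σ)) := (Finite.equivFin σ).trans Equiv.ulift.symm
  have hrename : rename e p = 0 := by
    refine eq_zero_of_eval_eq_zero _ _ _ (fun v => by rw [eval_rename]; exact h _) ?_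
    refine mem_restrictDegree_iff_degreeOf_le.mpr fun j => ?_
    rw [← e.apply_symm_apply j, degreeOf_rename_of_injective e.injective]
    exact hp _
  exact rename_injective e e.injective (by rw [hrename, map_zero])

theorem forall_eval_eq_zero_iff_of_degreeOf_le [Finite σ] {p : MvPolynomial σ K}
    (hp : ∀ i, p.degreeOf i ≤ Fintype.card K - 1) : (∀ v : σ → K, eval v p = 0) ↔ p = 0 :=
  ⟨fun h => eq_zero_of_eval_eq_zero_of_degreeOf_le h hp, fun h v => by rw [h, map_zero]⟩

theorem span_X_pow_card_sub_X_le_ker_eval (x : σ → K) :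
    Ideal.span (Set.range fun i => (X i : MvPolynomial σ K) ^ Fintype.card K - X i) ≤
      RingHom.ker (eval x) :=
  Ideal.span_le.mpr <| Set.range_subset_iff.mpr fun i => by
    simp [RingHom.mem_ker, FiniteField.pow_card]

theorem eval_eq_of_sub_mem_span_X_pow_card_sub_X {P R : MvPolynomial σ K}
    (h : P - R ∈ Ideal.span (Set.range fun i => (X i : MvPolynomial σ K) ^ Fintype.card K - X i))
    (x : σ → K) : eval x P = eval x R := by
  have hker := span_X_pow_card_sub_X_le_ker_eval x h
  rwa [RingHom.mem_ker, map_sub, sub_eq_zero] at hker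

end MvPolynomial

open MvPolynomial in
/-- Let `F` be a finite field with `q` elements and `P ∈ F[X_1, …, X_n]`.  If `R` is a reduced
representative of `P` (degree at most `q - 1` in each variable, and `P - R` lies in the ideal
generated by the `X_i^q - X_i`), then `P` has a nonzero value on `F^n` iff `R ≠ 0`. -/
theorem exists_nonzero_eval_iff_reduced_ne_zero {F : Type*} [Field F] [Fintype F] (q n : ℕ)
    (hq : Fintype.card F = q) (P R : MvPolynomial (Fin n) F)
    (hdeg : ∀ i : Fin n, R.degreeOf i ≤ q - 1)
    (hmem : P - R ∈ Ideal.span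
      (Set.range fun i : Fin n => (MvPolynomial.X i : MvPolynomial (Fin n) F) ^ q
        - MvPolynomial.X i)) :
    (∃ x : Fin n → F, MvPolynomial.eval x P ≠ 0) ↔ R ≠ 0 := by
  subst hq
  simp_rw [eval_eq_of_sub_mem_span_X_pow_card_sub_X hmem]
  rw [← not_iff_not]
  push Not
  exact forall_eval_eq_zero_iff_of_degreeOf_le hdeg
end

section
/- Let F be a finite field with q elements, let P be a polynomial in F[X_1, …, X_n], and fix a monomial ordering ≺ on the monomials in X_1, …, X_n. Let R be a reduced representative of P (the degree of R in each variable is at most q−1 and P−R lies in the ideal generated by X_1^q−X_1, …, X_n^q−X_n), assume R ≠ 0, and let X_1^{j_1}⋯X_n^{j_n} be the leading monomial of R with respect to ≺. Then the number of points (x_1, …, x_n) in F^n with P(x_1, …, x_n) = 0 is at most q^n − (q−j_1)(q−j_2)⋯(q−j_n). -/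
/-!
This is the footprint bound. Let `S ⊆ F^n` be the common zero set of `R` and the field equations
`X_i^q - X_i`, which is the zero set of `P`. Evaluation on `S` maps `F[X]` onto the functions
`S → F` and kills the ideal they generate. Dividing by `R` and the field equations with respect
to `≺` reduces every polynomial modulo that ideal to a combination of the monomials of the box
`[0, q-1]^n` that the leading monomial of `R` does not divide. Hence `|S|` is at most the number
of those monomials, which is `q^n - ∏ (q - j_i)`.
-/

/-- The leading monomial (exponent vector) of a polynomial `f` with respect to a monomial
order `m`: the `m`-largest element of the support of `f` (and `0` for the zero polynomial). -/
noncomputable def leadingExp {σ K : Type*} [CommSemiring K] (m : MonomialOrder σ)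
    (f : MvPolynomial σ K) : σ →₀ ℕ :=
  m.toSyn.symm (f.support.sup fun d => m.toSyn d)

open MvPolynomial Finset

theorem leadingExp_eq_degree {σ K : Type*} [CommSemiring K] (m : MonomialOrder σ)
    (f : MvPolynomial σ K) : leadingExp m f = m.degree f :=
  rfl

namespace MonomialOrder

variable {σ : Type*} (m : MonomialOrder σ)

section FieldEquation

variable {R : Type*} [CommRing R] [Nontrivial R] {q : ℕ}

theorem degree_X_lt_degree_X_pow (hq : 1 < q) (i : σ) :
    m.degree (X i : MvPolynomial σ R) ≺[m] m.degree (X i ^ q : MvPolynomial σ R) := by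
  classical
  rw [degree_X, X_pow_eq_monomial, degree_monomial, if_neg one_ne_zero]
  exact lt_of_le_of_ne (m.toSyn_monotone (Finsupp.single_le_single.2 hq.le))
    (m.toSyn.injective.ne ((Finsupp.single_injective i).ne hq.ne))

theorem degree_X_pow_sub_X (hq : 1 < q) (i : σ) :
    m.degree (X i ^ q - X i : MvPolynomial σ R) = Finsupp.single i q := by
  classical
  rw [m.degree_sub_of_lt (m.degree_X_lt_degree_X_pow hq i), X_pow_eq_monomial, degree_monomial,
    if_neg one_ne_zero]

theorem leadingCoeff_X_pow_sub_X (hq : 1 < q) (i : σ) :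
    m.leadingCoeff (X i ^ q - X i : MvPolynomial σ R) = 1 := by
  rw [m.leadingCoeff_sub_of_lt (m.degree_X_lt_degree_X_pow hq i), X_pow_eq_monomial,
    leadingCoeff_monomial]

end FieldEquation

variable {K : Type*} [Field K] {B : Set (MvPolynomial σ K)}

theorem exists_mem_restrictSupport_sub_mem_span (hB : ∀ b ∈ B, b ≠ 0) {Δ : Set (σ →₀ ℕ)}
    (hΔ : ∀ c : σ →₀ ℕ, (∀ b ∈ B, ¬ m.degree b ≤ c) → c ∈ Δ) (f : MvPolynomial σ K) :
    ∃ r ∈ restrictSupport K Δ, f - r ∈ Ideal.span B := by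
  obtain ⟨g, r, hf, -, hr⟩ :=
    m.div_set (fun b hb ↦ (m.leadingCoeff_ne_zero_iff.2 (hB b hb)).isUnit) f
  refine ⟨r, fun c hc ↦ hΔ c (hr c hc), ?_⟩
  rw [hf, add_sub_cancel_right]
  have : Finsupp.linearCombination (MvPolynomial σ K) ((↑) : B → MvPolynomial σ K) g ∈
      Submodule.span (MvPolynomial σ K) (Set.range ((↑) : B → MvPolynomial σ K)) :=
    Finsupp.mem_span_range_iff_exists_finsupp.2 ⟨g, rfl⟩
  rwa [Subtype.range_coe] at this

theorem ncard_commonZeros_le_card [Fintype K] [Finite σ] (hB : ∀ b ∈ B, b ≠ 0)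
    (Δ : Finset (σ →₀ ℕ)) (hΔ : ∀ c : σ →₀ ℕ, (∀ b ∈ B, ¬ m.degree b ≤ c) → c ∈ Δ) :
    {x : σ → K | ∀ b ∈ B, eval x b = 0}.ncard ≤ #Δ := by
  set S := {x : σ → K | ∀ b ∈ B, eval x b = 0}
  let Φ : MvPolynomial σ K →ₗ[K] S → K := LinearMap.funLeft K K ((↑) : S → σ → K) ∘ₗ evalₗ K σ
  have hΦ : Function.Surjective Φ :=
    (LinearMap.funLeft_surjective_of_injective K K _ Subtype.val_injective).comp
      (LinearMap.range_eq_top.1 (top_le_iff.1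
        (map_restrict_dom_evalₗ K σ ▸ LinearMap.map_le_range)))
  have hsurj : Function.Surjective (Φ ∘ₗ (restrictSupport K (Δ : Set (σ →₀ ℕ))).subtype) := by
    intro u
    obtain ⟨f, rfl⟩ := hΦ u
    obtain ⟨r, hr, hfr⟩ := m.exists_mem_restrictSupport_sub_mem_span hB hΔ f
    refine ⟨⟨r, hr⟩, funext fun x ↦ ?_⟩
    have hker : Ideal.span B ≤ RingHom.ker (eval x.1) :=
      Ideal.span_le.2 fun b hb ↦ RingHom.mem_ker.2 (x.2 b hb)
    have := hker hfr
    rw [RingHom.mem_ker, map_sub, sub_eq_zero] at this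
    exact this.symm
  have := Fintype.ofFinite S
  have := Module.Finite.of_basis (basisRestrictSupport K (Δ : Set (σ →₀ ℕ)))
  calc S.ncard = Module.finrank K (S → K) := by
        rw [Module.finrank_fintype_fun_eq_card, ← Nat.card_eq_fintype_card, Nat.card_coe_set_eq]
    _ ≤ Module.finrank K (restrictSupport K (Δ : Set (σ →₀ ℕ))) :=
        LinearMap.finrank_le_finrank_of_surjective hsurj
    _ = #Δ := by simp [Module.finrank_eq_card_basis (basisRestrictSupport K _)]

end MonomialOrder

theorem card_finsupp_range_filter_not_le (σ : Type*) [Fintype σ] (j : σ →₀ ℕ) (q : ℕ) :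
    #{c ∈ univ.finsupp fun _ : σ ↦ range q | ¬ j ≤ c} = q ^ Fintype.card σ - ∏ i, (q - j i) := by
  classical
  have hle : {c ∈ univ.finsupp fun _ : σ ↦ range q | j ≤ c} =
      univ.finsupp fun i ↦ Ico (j i) q := by
    ext c
    simp [mem_finsupp_iff, Finsupp.le_def, forall_and, and_comm]
  rw [filter_not, card_sdiff_of_subset (filter_subset _ _), hle]
  simp

theorem card_zeros_le_of_leading_monomial_general {F : Type*} [Field F] [Fintype F] (q n : ℕ)
    (hq : Fintype.card F = q) (m : MonomialOrder (Fin n)) (P R : MvPolynomial (Fin n) F)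
    (hmem : P - R ∈ Ideal.span
      (Set.range fun i : Fin n => (MvPolynomial.X i : MvPolynomial (Fin n) F) ^ q
        - MvPolynomial.X i))
    (hR : R ≠ 0) :
    {x : Fin n → F | MvPolynomial.eval x P = 0}.ncard ≤
      q ^ n - ∏ i : Fin n, (q - leadingExp m R i) := by
  have hq1 : 1 < q := hq ▸ Fintype.one_lt_card
  set E := Set.range fun i : Fin n => (X i : MvPolynomial (Fin n) F) ^ q - X i
  have hE : ∀ x, ∀ e ∈ E, eval x e = 0 := by
    rintro x _ ⟨i, rfl⟩
    simp [← hq, FiniteField.pow_card]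
  have hzeros : {x | eval x P = 0} = {x | ∀ b ∈ insert R E, eval x b = 0} := by
    ext x
    have hPR : P - R ∈ RingHom.ker (eval x) :=
      Ideal.span_le.2 (fun e he ↦ RingHom.mem_ker.2 (hE x e he)) hmem
    rw [RingHom.mem_ker, map_sub, sub_eq_zero] at hPR
    simp only [Set.mem_ofPred_eq, Set.forall_mem_insert, hPR]
    exact (and_iff_left (hE x)).symm
  have hB : ∀ b ∈ insert R E, b ≠ 0 := by
    rintro _ (rfl | ⟨i, rfl⟩)
    · exact hR
    · exact m.leadingCoeff_ne_zero_iff.1 (by rw [m.leadingCoeff_X_pow_sub_X hq1]; exact one_ne_zero)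
  have hcard := card_finsupp_range_filter_not_le (Fin n) (m.degree R) q
  rw [Fintype.card_fin] at hcard
  rw [hzeros, leadingExp_eq_degree, ← hcard]
  refine m.ncard_commonZeros_le_card hB _ fun c hc ↦ ?_
  rw [mem_filter, mem_finsupp_iff]
  refine ⟨⟨subset_univ _, fun i _ ↦ mem_range.2 ?_⟩, hc R (Set.mem_insert _ _)⟩
  have := hc _ (Set.mem_insert_of_mem _ ⟨i, rfl⟩)
  rwa [m.degree_X_pow_sub_X hq1, Finsupp.single_le_iff, not_le] at this

/-- Let `F` be a finite field with `q` elements, `P ∈ F[X_1, …, X_n]`, and let `R` be a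
reduced representative of `P` modulo `(X_1^q - X_1, …, X_n^q - X_n)` with `R ≠ 0`.  If
`X_1^{j_1} ⋯ X_n^{j_n}` is the leading monomial of `R` with respect to a monomial order,
then `P` has at most `q^n - (q - j_1) ⋯ (q - j_n)` zeros in `F^n`. -/
theorem card_zeros_le_of_leading_monomial {F : Type*} [Field F] [Fintype F] (q n : ℕ)
    (hq : Fintype.card F = q) (m : MonomialOrder (Fin n)) (P R : MvPolynomial (Fin n) F)
    (hdeg : ∀ i : Fin n, R.degreeOf i ≤ q - 1)
    (hmem : P - R ∈ Ideal.span
      (Set.range fun i : Fin n => (MvPolynomial.X i : MvPolynomial (Fin n) F) ^ q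
        - MvPolynomial.X i))
    (hR : R ≠ 0) :
    {x : Fin n → F | MvPolynomial.eval x P = 0}.ncard ≤
      q ^ n - ∏ i : Fin n, (q - leadingExp m R i) :=
  card_zeros_le_of_leading_monomial_general q n hq m P R hmem hR
end

section
/- Let η, T, q be natural numbers with T < q. Let μ be a natural number and let x_1, …, x_μ be natural numbers satisfying 0 ≤ x_i ≤ T for all i and x_1 + ⋯ + x_μ ≤ T·η. Then ∏_{i=1}^{μ}(q−x_i)/q^μ ≥ ((q−T)/q)^η; equivalently, (∏_{i=1}^{μ}(q−x_i))·q^η ≥ (q−T)^η·q^μ. -/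
/-!
Put `a = T / q` and `tᵢ = xᵢ / T ∈ [0, 1]`, so that `xᵢ / q = tᵢ a` and `∑ tᵢ ≤ η`. Bernoulli's
inequality for the exponent `tᵢ ≤ 1` gives `(1 - a) ^ tᵢ ≤ 1 - tᵢ a`; multiplying these,
`(1 - a) ^ η ≤ (1 - a) ^ ∑ tᵢ ≤ ∏ (1 - xᵢ / q)`, and clearing denominators gives the claim.
-/

open Finset Real

theorem rpow_one_sub_le_prod_one_sub_mul {ι : Type*} (s : Finset ι) {a η : ℝ} (t : ι → ℝ)
    (ha₀ : 0 ≤ a) (ha₁ : a ≤ 1) (ht₀ : ∀ i ∈ s, 0 ≤ t i) (ht₁ : ∀ i ∈ s, t i ≤ 1)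
    (hsum : ∑ i ∈ s, t i ≤ η) :
    (1 - a) ^ η ≤ ∏ i ∈ s, (1 - t i * a) := by
  have bernoulli : ∀ i ∈ s, (1 - a) ^ t i ≤ 1 - t i * a := fun i hi => by
    simpa [← sub_eq_add_neg] using
      rpow_one_add_le_one_add_mul_self (s := -a) (by linarith) (ht₀ i hi) (ht₁ i hi)
  calc (1 - a) ^ η ≤ (1 - a) ^ ∑ i ∈ s, t i :=
        rpow_le_rpow_of_exponent_ge' (by linarith) (by linarith) (sum_nonneg ht₀) hsum
    _ = ∏ i ∈ s, (1 - a) ^ t i := rpow_sum_of_nonneg (by linarith) ht₀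
    _ ≤ ∏ i ∈ s, (1 - t i * a) :=
        prod_le_prod (fun i _ => rpow_nonneg (by linarith) _) bernoulli

theorem rpow_one_sub_div_le_prod_one_sub_div {ι : Type*} (s : Finset ι) {η T q : ℝ}
    (x : ι → ℝ) (hT : 0 ≤ T) (hTq : T ≤ q) (hx₀ : ∀ i ∈ s, 0 ≤ x i) (hx : ∀ i ∈ s, x i ≤ T)
    (hsum : ∑ i ∈ s, x i ≤ T * η) :
    (1 - T / q) ^ η ≤ ∏ i ∈ s, (1 - x i / q) := by
  rcases hT.eq_or_lt with rfl | hT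
  · have hx_zero : ∀ i ∈ s, x i = 0 := fun i hi => le_antisymm (hx i hi) (hx₀ i hi)
    rw [zero_div, sub_zero, one_rpow]
    exact (prod_eq_one fun i hi => by rw [hx_zero i hi, zero_div, sub_zero]).ge
  have hq : 0 < q := hT.trans_le hTq
  simpa only [div_mul_div_cancel₀ hT.ne'] using
    rpow_one_sub_le_prod_one_sub_mul s (a := T / q) (fun i => x i / T) (by positivity)
      (div_le_one_of_le₀ hTq hq.le) (fun i hi => div_nonneg (hx₀ i hi) hT.le)
      (fun i hi => div_le_one_of_le₀ (hx i hi) hT.le)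
      (by rw [← sum_div, div_le_iff₀ hT, mul_comm]; exact hsum)

/-- Let `η, T, q` be natural numbers with `T < q`, and let `x_1, …, x_μ` be natural numbers
with `x_i ≤ T` for all `i` and `x_1 + ⋯ + x_μ ≤ T·η`.  Then
`∏ (q - x_i) / q^μ ≥ ((q - T)/q)^η`, i.e. `(∏ (q - x_i)) · q^η ≥ (q - T)^η · q^μ`. -/
theorem prod_bound_ge_ho_bound (η T q μ : ℕ) (hTq : T < q) (x : Fin μ → ℕ)
    (hx : ∀ i, x i ≤ T) (hsum : ∑ i, x i ≤ T * η) :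
    (q - T) ^ η * q ^ μ ≤ (∏ i, (q - x i)) * q ^ η := by
  have hq : (q : ℝ) ≠ 0 := by exact_mod_cast hTq.pos.ne'
  have key : (1 - (T : ℝ) / q) ^ η ≤ ∏ i, (1 - (x i : ℝ) / q) := by
    simpa only [rpow_natCast] using
      rpow_one_sub_div_le_prod_one_sub_div univ (η := η) (fun i => (x i : ℝ)) (Nat.cast_nonneg T)
        (by exact_mod_cast hTq.le) (fun i _ => Nat.cast_nonneg _)
        (fun i _ => by exact_mod_cast hx i) (by exact_mod_cast hsum)
  rw [← Nat.cast_le (α := ℝ)]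
  push_cast [Nat.cast_sub hTq.le]
  calc ((q : ℝ) - T) ^ η * q ^ μ = (1 - (T : ℝ) / q) ^ η * q ^ μ * q ^ η := by
        rw [mul_right_comm, ← mul_pow, sub_mul, div_mul_cancel₀ _ hq, one_mul]
    _ ≤ (∏ i, (1 - (x i : ℝ) / q)) * q ^ μ * q ^ η := by gcongr
    _ = (∏ i, ((q - x i : ℕ) : ℝ)) * q ^ η := by
        rw [← Fin.prod_const, ← prod_mul_distrib]
        congr 1
        refine prod_congr rfl fun i _ => ?_
        rw [Nat.cast_sub ((hx i).trans hTq.le), sub_mul, div_mul_cancel₀ _ hq, one_mul]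
end

section
/- Let α be a type, let r be a relation on α whose transitive closure is irreflexive (i.e., r is acyclic), and let p be a permutation of α. Suppose λ ∈ α and x is a natural number such that: (1) the elements λ, p(λ), p^{(2)}(λ), …, p^{(x)}(λ) are pairwise distinct; (2) p^{(x+1)}(λ) belongs to the set {λ, p(λ), …, p^{(x)}(λ)}; and (3) for every k with 0 ≤ k ≤ x, either p^{(k+1)}(λ) = p^{(k)}(λ) or r(p^{(k)}(λ), p^{(k+1)}(λ)) holds. Then x = 0. -/
/-!
If some step of the orbit were a fixed point, `p^{(k+1)}(λ) = p^{(k)}(λ)`, injectivity of `p^{(k)}`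
would make `λ` itself fixed, collapsing the orbit to a point; for `x > 0` this contradicts
distinctness. So every step is an `r`-edge, and the orbit from `p^{(k)}(λ)` to
`p^{(x+1)}(λ) = p^{(k)}(λ)` is a cycle of `r`, which acyclicity forbids.
-/

open Function Relation

theorem Function.Injective.isFixedPt_of_iterate_succ {α : Type*} {f : α → α} (hf : Injective f)
    {a : α} {n : ℕ} (h : f^[n + 1] a = f^[n] a) : IsFixedPt f a :=
  hf.iterate n (by rwa [← iterate_succ_apply])

theorem Relation.transGen_of_rel_succ_of_lt {α : Type*} {r : α → α → Prop} {g : ℕ → α}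
    {a b : ℕ} (h : ∀ i ∈ Set.Ico a b, r (g i) (g (i + 1))) (hab : a < b) :
    TransGen r (g a) (g b) :=
  (transGen_of_succ_of_lt (fun i j => r (g i) (g j)) (by simpa only [Order.succ_eq_add_one])
    hab).lift g fun _ _ => id

/-- Let `r` be an acyclic relation on `α` (its transitive closure is irreflexive) and let
`p` be a permutation of `α`.  If `λ, p(λ), …, p^{(x)}(λ)` are pairwise distinct,
`p^{(x+1)}(λ)` lies in `{λ, p(λ), …, p^{(x)}(λ)}`, and each consecutive step either is a
fixed point (`p^{(k+1)}(λ) = p^{(k)}(λ)`) or follows an `r`-edge, then `x = 0`. -/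
theorem perm_cycle_acyclic_eq_zero {α : Type*} (r : α → α → Prop)
    (hr : Irreflexive (Relation.TransGen r)) (p : Equiv.Perm α) (lam : α) (x : ℕ)
    (h1 : ∀ i ≤ x, ∀ j ≤ x, (⇑p)^[i] lam = (⇑p)^[j] lam → i = j)
    (h2 : ∃ k ≤ x, (⇑p)^[x + 1] lam = (⇑p)^[k] lam)
    (h3 : ∀ k ≤ x, (⇑p)^[k + 1] lam = (⇑p)^[k] lam ∨ r ((⇑p)^[k] lam) ((⇑p)^[k + 1] lam)) :
    x = 0 := by
  by_contra hx
  obtain ⟨k, hk, hcycle⟩ := h2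
  have hedge : ∀ j ∈ Set.Ico k (x + 1), r ((⇑p)^[j] lam) ((⇑p)^[j + 1] lam) := by
    intro j hj
    refine (h3 j (Nat.lt_succ_iff.mp hj.2)).resolve_left fun hfix => hx ?_
    have hlam : IsFixedPt p lam := p.injective.isFixedPt_of_iterate_succ hfix
    exact h1 x le_rfl 0 (Nat.zero_le x) (hlam.iterate x)
  have hloop :=
    transGen_of_rel_succ_of_lt (g := fun n => (⇑p)^[n] lam) hedge (Nat.lt_add_one_of_le hk)
  exact hr _ (hcycle ▸ hloop)
end

section
/- Let K be a commutative ring, let σ be a type of variables, and let M be an n×n matrix with entries in the multivariate polynomial ring K[X_v : v ∈ σ] such that every entry of M has total degree at most 1. Let C be the set of column indices j such that some entry M(i, j) has total degree exactly 1 (i.e., the column contains a non-constant entry). Then the total degree of the determinant of M is at most the cardinality of C. -/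
open MvPolynomial Finset

/-- Each term of the Leibniz expansion takes exactly one entry from every column. -/
theorem MvPolynomial.totalDegree_det_le_sum_sup_col {R σ n : Type*} [CommRing R] [Fintype n]
    [DecidableEq n] (M : Matrix n n (MvPolynomial σ R)) :
    M.det.totalDegree ≤ ∑ j, univ.sup fun i => (M i j).totalDegree := by
  rw [Matrix.det_apply]
  refine (totalDegree_finsetSum _ _).trans (Finset.sup_le fun g _ => ?_)
  calc (Equiv.Perm.sign g • ∏ j, M (g j) j).totalDegree
      ≤ (∏ j, M (g j) j).totalDegree := totalDegree_smul_le _ _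
    _ ≤ ∑ j, (M (g j) j).totalDegree := totalDegree_finsetProd _ _
    _ ≤ ∑ j, univ.sup fun i => (M i j).totalDegree :=
      sum_le_sum fun j _ => le_sup (f := fun i => (M i j).totalDegree) (mem_univ (g j))

theorem MvPolynomial.sum_sup_totalDegree_col_le_ncard {R σ m n : Type*} [CommSemiring R]
    [Fintype m] [Fintype n] (M : Matrix m n (MvPolynomial σ R))
    (hdeg : ∀ i j, (M i j).totalDegree ≤ 1) :
    ∑ j, (univ.sup fun i => (M i j).totalDegree) ≤ {j | ∃ i, (M i j).totalDegree = 1}.ncard := by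
  classical
  rw [Set.ncard_eq_toFinset_card', Set.toFinset_ofPred, card_eq_sum_ones, sum_filter]
  refine sum_le_sum fun j _ => ?_
  split_ifs with hj
  · exact Finset.sup_le fun i _ => hdeg i j
  · push Not at hj
    exact Finset.sup_le fun i _ => Nat.le_of_lt_succ ((hdeg i j).lt_of_ne (hj i))

/-- Let `M` be an `n × n` matrix over a multivariate polynomial ring `K[X_v : v ∈ σ]` all of
whose entries have total degree at most `1`, and let `C` be the set of columns containing a
non-constant entry (an entry of total degree exactly `1`).  Then the total degree of the
determinant of `M` is at most the cardinality of `C`. -/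
theorem det_totalDegree_le_card_nonconstant_columns {K σ : Type*} [CommRing K] (n : ℕ)
    (M : Matrix (Fin n) (Fin n) (MvPolynomial σ K))
    (hdeg : ∀ i j, (M i j).totalDegree ≤ 1) :
    (M.det).totalDegree ≤ {j : Fin n | ∃ i, (M i j).totalDegree = 1}.ncard :=
  (totalDegree_det_le_sum_sup_col M).trans (sum_sup_totalDegree_col_le_ncard M hdeg)
end

section
/- Let F be a finite field with q elements and let R be a nonzero polynomial in F[X_1, …, X_μ]. Let T and η be natural numbers with T < q, and suppose that the degree of R in each variable X_i is at most T and that the total degree of R is at most T·η. Then the number of points (x_1, …, x_μ) in F^μ with R(x_1, …, x_μ) ≠ 0 is at least (q−T)^η·q^{μ−η} when μ ≥ η; equivalently, (number of such points)·q^η ≥ (q−T)^η·q^μ. In particular, if the coordinates are chosen independently and uniformly at random from F, the probability that R evaluates to a nonzero value is at least ((q−T)/q)^η. -/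
/-!
Expanding a nonzero `R` in `X_0`, with leading coefficient `L ∈ F[X_1, …]` of degree `k`, every
point of `F^(μ-1)` where `L ≠ 0` extends to at least `q - k` nonzero points of `R`. By induction
on `μ`, some exponent `u` in the support of `R` (its lexicographically leading one) satisfies
`∏ i, (q - u i) ≤ #{x | R x ≠ 0}`. The degree bounds give `u i ≤ T` and `∑ i, u i ≤ T η`, and
under these constraints `∏ i, (q - u i) ≥ (q - T)^η q^μ / q^η` by concavity: raising to the
power `T`, it suffices that `(q - T)^u q^(T - u) ≤ (q - u)^T`, the weighted AM-GM inequality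
for `q - u = (u (q - T) + (T - u) q) / T`.
-/

open Finset

theorem Real.pow_mul_pow_le_mean_pow {a b : ℝ} (ha : 0 ≤ a) (hb : 0 ≤ b) (m n : ℕ) :
    a ^ m * b ^ n ≤ ((m * a + n * b) / (m + n)) ^ (m + n) := by
  rcases (m + n).eq_zero_or_pos with hmn | hmn
  · obtain ⟨rfl, rfl⟩ := Nat.add_eq_zero_iff.mp hmn
    simp
  have hmn' : (0 : ℝ) < m + n := by exact_mod_cast hmn
  have amgm := Real.geom_mean_le_arith_mean univ ![(m : ℝ), n] ![a, b]
    (by simp [Fin.forall_fin_two]) (by simpa using hmn') (by simp [Fin.forall_fin_two, ha, hb])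
  simp only [Fin.prod_univ_two, Fin.sum_univ_two, Matrix.cons_val_zero, Matrix.cons_val_one,
    Real.rpow_natCast] at amgm
  rw [Real.rpow_inv_le_iff_of_pos (by positivity) (by positivity) hmn'] at amgm
  exact_mod_cast amgm

theorem Nat.sub_pow_mul_pow_le_sub_pow {q T u : ℕ} (hu : u ≤ T) :
    (q - T) ^ u * q ^ (T - u) ≤ (q - u) ^ T := by
  rcases u.eq_zero_or_pos with rfl | hu0
  · simp
  rcases le_or_gt q T with hqT | hTq
  · simp [Nat.sub_eq_zero_of_le hqT, zero_pow hu0.ne']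
  have mean : ((u : ℝ) * ((q - T : ℕ) : ℝ) + ((T - u : ℕ) : ℝ) * q) / (u + (T - u : ℕ))
      = ((q - u : ℕ) : ℝ) := by
    have hT0 : (T : ℝ) ≠ 0 := by exact_mod_cast (hu0.trans_le hu).ne'
    rw [← Nat.cast_add, Nat.add_sub_cancel' hu]
    push_cast [Nat.cast_sub hu, Nat.cast_sub hTq.le, Nat.cast_sub (hu.trans hTq.le)]
    field_simp
    ring
  have := Real.pow_mul_pow_le_mean_pow (q - T : ℕ).cast_nonneg (q : ℕ).cast_nonneg u (T - u)
  rw [mean, Nat.add_sub_cancel' hu] at this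
  exact_mod_cast this

theorem Nat.sub_pow_mul_pow_card_le_prod_sub_mul_pow {ι : Type*} [Fintype ι] {q T η : ℕ}
    (u : ι → ℕ) (hu : ∀ i, u i ≤ T) (hsum : ∑ i, u i ≤ T * η) :
    (q - T) ^ η * q ^ Fintype.card ι ≤ (∏ i, (q - u i)) * q ^ η := by
  rcases T.eq_zero_or_pos with rfl | hT
  · simp [fun i => Nat.le_zero.mp (hu i), mul_comm]
  rw [← Nat.pow_le_pow_iff_left hT.ne']
  set s := ∑ i, u i
  set m := ∑ i, (T - u i)
  have hsm : s + m = Fintype.card ι * T := by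
    simp only [s, m, ← sum_add_distrib, Nat.add_sub_cancel' (hu _), sum_const, Finset.card_univ,
      smul_eq_mul]
  obtain ⟨d, hd⟩ := Nat.exists_eq_add_of_le hsum
  have coordwise : (q - T) ^ s * q ^ m ≤ (∏ i, (q - u i)) ^ T := by
    rw [← prod_pow_eq_pow_sum, ← prod_pow_eq_pow_sum, ← prod_mul_distrib, ← prod_pow]
    exact prod_le_prod' fun i _ => Nat.sub_pow_mul_pow_le_sub_pow (hu i)
  calc ((q - T) ^ η * q ^ Fintype.card ι) ^ T
      = (q - T) ^ s * (q - T) ^ d * q ^ (s + m) := by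
        rw [mul_pow, ← pow_mul, ← pow_mul, mul_comm η, hd, hsm, pow_add]
    _ ≤ (q - T) ^ s * q ^ d * q ^ (s + m) := by gcongr; exact Nat.sub_le q T
    _ = (q - T) ^ s * q ^ m * (q ^ η) ^ T := by
        rw [← pow_mul, mul_comm η, hd]
        ring
    _ ≤ ((∏ i, (q - u i)) * q ^ η) ^ T := by rw [mul_pow]; gcongr

section

variable {F : Type*} [Field F] [Fintype F] [DecidableEq F]

theorem Polynomial.card_sub_natDegree_le_card_eval_ne_zero {f : Polynomial F} (hf : f ≠ 0) :
    Fintype.card F - f.natDegree ≤ #{a | f.eval a ≠ 0} := by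
  have roots : #{a | f.eval a = 0} ≤ f.natDegree :=
    Polynomial.card_le_degree_of_subset_roots fun a ha => by simpa [hf] using ha
  have split := card_filter_add_card_filter_not (s := univ) (fun a => f.eval a = 0)
  rw [card_univ] at split
  simp only [ne_eq]
  omega

theorem MvPolynomial.card_sub_natDegree_mul_card_eval_leadingCoeff_ne_zero_le
    {n : ℕ} (S : MvPolynomial (Fin (n + 1)) F) :
    (Fintype.card F - (finSuccEquiv F n S).natDegree) *
        #{y | eval y (finSuccEquiv F n S).leadingCoeff ≠ 0} ≤ #{x | eval x S ≠ 0} := by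
  set P := finSuccEquiv F n S
  set B : Finset (Fin n → F) := {y | eval y P.leadingCoeff ≠ 0}
  let fiber (y : Fin n → F) : Finset F := {a | (P.map (eval y)).eval a ≠ 0}
  have fiber_card (y) (hy : y ∈ B) : Fintype.card F - P.natDegree ≤ #(fiber y) := by
    have hk : (P.map (eval y)).coeff P.natDegree ≠ 0 := by
      simpa [Polynomial.coeff_map, B] using hy
    have hf : P.map (eval y) ≠ 0 := fun h => hk (by simp [h])
    calc Fintype.card F - P.natDegree
        ≤ Fintype.card F - (P.map (eval y)).natDegree := by
          gcongr; exact Polynomial.natDegree_map_le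
      _ ≤ #(fiber y) := Polynomial.card_sub_natDegree_le_card_eval_ne_zero hf
  calc (Fintype.card F - P.natDegree) * #B
      = ∑ y ∈ B, (Fintype.card F - P.natDegree) := by rw [sum_const, smul_eq_mul, mul_comm]
    _ ≤ #(B.sigma fiber) := by rw [card_sigma]; exact sum_le_sum fiber_card
    _ ≤ #{x | eval x S ≠ 0} := by
      refine card_le_card_of_injOn (fun p => Fin.cons p.2 p.1) (fun p hp => ?_) ?_
      · simp only [fiber, mem_coe, mem_sigma, mem_filter, mem_univ, true_and] at hp
        simpa [eval_eq_eval_mv_eval'] using hp.2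
      · rintro ⟨y, a⟩ - ⟨y', a'⟩ - h
        obtain ⟨rfl, rfl⟩ := Fin.cons_inj.mp h
        rfl

theorem MvPolynomial.exists_mem_support_prod_le_card_eval_ne_zero :
    ∀ {n : ℕ} {S : MvPolynomial (Fin n) F}, S ≠ 0 →
      ∃ u ∈ S.support, ∏ i, (Fintype.card F - u i) ≤ #{x | eval x S ≠ 0}
  | 0, S, hS => by
    obtain ⟨u, hu⟩ := support_nonempty.mpr hS
    refine ⟨u, hu, ?_⟩
    rw [Fin.prod_univ_zero, Nat.one_le_iff_ne_zero, Nat.ne_zero_iff_zero_lt, card_pos]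
    refine ⟨Fin.elim0, mem_filter.mpr ⟨mem_univ _, ?_⟩⟩
    rw [eq_C_of_isEmpty S, eval_C]
    exact fun h => hS (by rw [eq_C_of_isEmpty S, h, map_zero])
  | n + 1, S, hS => by
    set P := finSuccEquiv F n S
    have hL : P.leadingCoeff ≠ 0 := by simpa [P] using hS
    obtain ⟨u, hu, hcount⟩ := exists_mem_support_prod_le_card_eval_ne_zero hL
    refine ⟨u.cons P.natDegree, mem_support_coeff_finSuccEquiv.mp hu, ?_⟩
    rw [Fin.prod_univ_succ, Finsupp.cons_zero]
    simp only [Finsupp.cons_succ]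
    exact (Nat.mul_le_mul_left _ hcount).trans
      (card_sub_natDegree_mul_card_eval_leadingCoeff_ne_zero_le S)

end

theorem card_nonzeros_ge_ho_bound_general {F : Type*} [Field F] [Fintype F] (q μ T η : ℕ)
    (hq : Fintype.card F = q) (R : MvPolynomial (Fin μ) F) (hR : R ≠ 0)
    (hdeg : ∀ i : Fin μ, R.degreeOf i ≤ T) (htot : R.totalDegree ≤ T * η) :
    (q - T) ^ η * q ^ μ ≤ {x : Fin μ → F | MvPolynomial.eval x R ≠ 0}.ncard * q ^ η := by
  classical
  subst hq
  obtain ⟨u, hu, hcount⟩ := MvPolynomial.exists_mem_support_prod_le_card_eval_ne_zero hR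
  have hsum : ∑ i, u i ≤ T * η := by
    simpa [Finsupp.sum_fintype] using (MvPolynomial.le_totalDegree hu).trans htot
  calc (Fintype.card F - T) ^ η * Fintype.card F ^ μ
      = (Fintype.card F - T) ^ η * Fintype.card F ^ Fintype.card (Fin μ) := by
        rw [Fintype.card_fin]
    _ ≤ (∏ i, (Fintype.card F - u i)) * Fintype.card F ^ η :=
        Nat.sub_pow_mul_pow_card_le_prod_sub_mul_pow u
          (fun i => (MvPolynomial.monomial_le_degreeOf i hu).trans (hdeg i)) hsum
    _ ≤ _ := by
        rw [Set.ncard_eq_toFinset_card', Set.toFinset_ofPred]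
        gcongr

/-- Let `F` be a finite field with `q` elements and let `R ∈ F[X_1, …, X_μ]` be a nonzero
polynomial.  Let `T < q` and `η` be natural numbers with `η ≤ μ`, and suppose the degree of
`R` in each variable is at most `T` and the total degree of `R` is at most `T·η`.  Then `R`
is nonzero at no fewer than `(q - T)^η · q^{μ - η}` points of `F^μ`; equivalently, the number
of such points satisfies `(#points) · q^η ≥ (q - T)^η · q^μ`, so a uniformly random point is
a nonzero point of `R` with probability at least `((q - T)/q)^η`. -/
theorem card_nonzeros_ge_ho_bound {F : Type*} [Field F] [Fintype F] (q μ T η : ℕ)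
    (hq : Fintype.card F = q) (R : MvPolynomial (Fin μ) F) (hR : R ≠ 0) (hT : T < q)
    (hdeg : ∀ i : Fin μ, R.degreeOf i ≤ T) (htot : R.totalDegree ≤ T * η) (hμ : η ≤ μ) :
    (q - T) ^ η * q ^ μ ≤ {x : Fin μ → F | MvPolynomial.eval x R ≠ 0}.ncard * q ^ η :=
  card_nonzeros_ge_ho_bound_general q μ T η hq R hR hdeg htot
end
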